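/- Let H be a finite set with |H| = N ≥ 1, let (X_t)_{t≥1} be i.i.d. random variables each uniformly distributed on H, and let A₁, …, A_r ⊆ H be pairwise disjoint nonempty subsets with |A_i| = a_i. Let T = min_{1≤i≤r} σ_{A_i} be the first time at which some A_i has been completely collected. Then E[T] = N · ∫₀¹ (1/(1−u)) · ∏_{i=1}^{r} (1 − u^{a_i}) du. (With a_i = m_i − 1, this is the average delay d^I of first-to-complete alignment among disjoint alignment sets of sizes I = (m₁, …, m_r), where the initial channel matrix has already occurred.) -/

import Mathlib

/-!
Since `T` is `ℕ`-valued, `E[T] = ∑ₜ P(T > t)`. Almost surely every element of `H` is eventually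
drawn, and then `T > t` means that every `Aᵢ` still misses an element after `t` draws. Expanding
`∏ᵢ (1 - ∏_{a ∈ Aᵢ} (1 - Yₐ))` with `Yₐ` the indicator that `a` is still unseen, and using
disjointness of the `Aᵢ`, writes this probability as a signed sum over choices `γ` of a nonempty
`γᵢ ⊆ Aᵢ` of `P(no element of ⋃ᵢ γᵢ drawn) = (1 - k/N)^t`, where `k = |⋃ᵢ γᵢ|`. Summing over `t`
turns each term into `N/k = N ∫₀¹ (1-u)^(k-1) du`, and the same expansion with every `Yₐ = 1 - u`
reassembles the integrand `(1-u)⁻¹ ∏ᵢ (1 - u^{aᵢ})`.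
-/

open MeasureTheory ProbabilityTheory Finset
open scoped ENNReal

/-- The collection time `σ_A`: the smallest time `t ≥ 1` such that every element of `A`
has appeared among `X_1, …, X_t` (with the convention `sInf ∅ = 0`). -/
noncomputable def collectTime {Ω H : Type*} (X : ℕ → Ω → H) (A : Set H) (ω : Ω) : ℕ :=
  sInf {t : ℕ | ∀ a ∈ A, ∃ s, 1 ≤ s ∧ s ≤ t ∧ X s ω = a}

theorem one_sub_prod_one_sub {α R : Type*} [CommRing R] [DecidableEq α] (s : Finset α)
    (f : α → R) :
    1 - ∏ a ∈ s, (1 - f a) = ∑ C ∈ s.powerset.erase ∅, (-1) ^ (#C + 1) * ∏ a ∈ C, f a := by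
  rw [prod_sub, ← add_sum_erase _ _ (empty_mem_powerset s)]
  simp [pow_succ, sum_neg_distrib]

theorem prod_one_sub_prod_one_sub {α ι R : Type*} [CommRing R] [DecidableEq α] [Fintype ι]
    [DecidableEq ι] {A : ι → Finset α} (hA : Pairwise fun i j ↦ Disjoint (A i) (A j))
    (f : α → R) :
    ∏ i, (1 - ∏ a ∈ A i, (1 - f a)) =
      ∑ γ ∈ Fintype.piFinset (fun i ↦ (A i).powerset.erase ∅),
        (∏ i, (-1) ^ (#(γ i) + 1)) * ∏ a ∈ univ.biUnion γ, f a := by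
  simp_rw [one_sub_prod_one_sub, prod_univ_sum, prod_mul_distrib]
  refine sum_congr rfl fun γ hγ ↦ ?_
  rw [prod_biUnion]
  intro i _ j _ hij
  simp only [Fintype.mem_piFinset, mem_erase, mem_powerset] at hγ
  exact (hA hij).mono (hγ i).2 (hγ j).2

theorem card_biUnion_pos {α ι : Type*} [DecidableEq α] [Fintype ι] [DecidableEq ι] [Nonempty ι]
    {A : ι → Finset α} {γ : ι → Finset α}
    (hγ : γ ∈ Fintype.piFinset (fun i ↦ (A i).powerset.erase ∅)) :
    0 < #(univ.biUnion γ) := by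
  obtain ⟨i⟩ := ‹Nonempty ι›
  simp only [Fintype.mem_piFinset, mem_erase] at hγ
  exact card_pos.mpr
    ((nonempty_iff_ne_empty.mpr (hγ i).1).mono (subset_biUnion_of_mem γ (mem_univ i)))

theorem integral_one_sub_pow_pred {k : ℕ} (hk : 0 < k) :
    ∫ u in (0 : ℝ)..1, (1 - u) ^ (k - 1) = 1 / k := by
  rw [intervalIntegral.integral_comp_sub_left (fun u ↦ u ^ (k - 1)), integral_pow]
  obtain ⟨n, rfl⟩ := Nat.exists_eq_add_of_lt hk
  simp

theorem integral_div_one_sub_mul_prod_one_sub_pow {α ι : Type*} [DecidableEq α] [Fintype ι]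
    [DecidableEq ι] [Nonempty ι] {A : ι → Finset α}
    (hA : Pairwise fun i j ↦ Disjoint (A i) (A j)) :
    ∫ u in (0 : ℝ)..1, 1 / (1 - u) * ∏ i, (1 - u ^ #(A i)) =
      ∑ γ ∈ Fintype.piFinset (fun i ↦ (A i).powerset.erase ∅),
        (∏ i, (-1 : ℝ) ^ (#(γ i) + 1)) * (1 / #(univ.biUnion γ)) := by
  have hae : ∀ᵐ u, u ∈ Set.uIoc (0 : ℝ) 1 → 1 / (1 - u) * ∏ i, (1 - u ^ #(A i)) =
      ∑ γ ∈ Fintype.piFinset (fun i ↦ (A i).powerset.erase ∅),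
        (∏ i, (-1 : ℝ) ^ (#(γ i) + 1)) * (1 - u) ^ (#(univ.biUnion γ) - 1) := by
    filter_upwards [Measure.ae_ne volume (1 : ℝ)] with u hu _
    have h := prod_one_sub_prod_one_sub hA fun _ ↦ 1 - u
    simp only [sub_sub_cancel, prod_const] at h
    rw [h, mul_sum]
    refine sum_congr rfl fun γ hγ ↦ ?_
    rw [← Nat.sub_add_cancel (card_biUnion_pos hγ), pow_succ, Nat.add_sub_cancel]
    field_simp [sub_ne_zero.mpr hu.symm]
  rw [intervalIntegral.integral_congr_ae hae, intervalIntegral.integral_finsetSum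
    fun _ _ ↦ (by fun_prop : Continuous _).intervalIntegrable _ _]
  refine sum_congr rfl fun γ hγ ↦ ?_
  rw [intervalIntegral.integral_const_mul, integral_one_sub_pow_pred (card_biUnion_pos hγ)]

theorem indicator_biUnion_one_apply_eq_one_sub_prod {α Ω : Type*} (s : Finset α)
    (U : α → Set Ω) (ω : Ω) :
    (⋃ a ∈ s, U a).indicator (1 : Ω → ℝ) ω = 1 - ∏ a ∈ s, (1 - (U a).indicator 1 ω) := by
  classical
  simp only [Set.indicator_apply, Set.mem_iUnion, exists_prop, Pi.one_apply]
  split_ifs with h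
  · obtain ⟨a, ha, hU⟩ := h
    rw [prod_eq_zero ha (by simp [hU]), sub_zero]
  · push Not at h
    rw [prod_eq_one fun a ha ↦ by simp [h a ha], sub_self]

theorem indicator_iInter_biUnion_apply {α Ω ι : Type*} [DecidableEq α] [Fintype ι]
    [DecidableEq ι] {A : ι → Finset α} (hA : Pairwise fun i j ↦ Disjoint (A i) (A j))
    (U : α → Set Ω) (ω : Ω) :
    (⋂ i, ⋃ a ∈ A i, U a).indicator (1 : Ω → ℝ) ω =
      ∑ γ ∈ Fintype.piFinset (fun i ↦ (A i).powerset.erase ∅),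
        (∏ i, (-1) ^ (#(γ i) + 1)) * (⋂ a ∈ univ.biUnion γ, U a).indicator 1 ω := by
  have hinter := prod_indicator_const_apply (R := ℝ) univ (fun i ↦ ⋃ a ∈ A i, U a) 1 ω
  simp only [one_pow, mem_univ, Set.iInter_true] at hinter
  simp_rw [← hinter, indicator_biUnion_one_apply_eq_one_sub_prod, prod_one_sub_prod_one_sub hA,
    prod_indicator_const_apply, one_pow]

theorem measureReal_iInter_biUnion {α Ω ι : Type*} [DecidableEq α] [Fintype ι] [DecidableEq ι]
    [MeasurableSpace Ω] {μ : Measure Ω} [IsFiniteMeasure μ] {A : ι → Finset α}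
    (hA : Pairwise fun i j ↦ Disjoint (A i) (A j)) {U : α → Set Ω}
    (hU : ∀ a, MeasurableSet (U a)) :
    μ.real (⋂ i, ⋃ a ∈ A i, U a) =
      ∑ γ ∈ Fintype.piFinset (fun i ↦ (A i).powerset.erase ∅),
        (∏ i, (-1) ^ (#(γ i) + 1)) * μ.real (⋂ a ∈ univ.biUnion γ, U a) := by
  have hmeas : ∀ B : Finset α, MeasurableSet (⋂ a ∈ B, U a) :=
    fun B ↦ B.measurableSet_biInter fun a _ ↦ hU a
  rw [← integral_indicator_one (.iInter fun i ↦ (A i).measurableSet_biUnion fun a _ ↦ hU a)]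
  simp_rw [indicator_iInter_biUnion_apply hA]
  rw [integral_finsetSum _ fun γ _ ↦ ((integrable_const 1).indicator (hmeas _)).const_mul _]
  simp_rw [integral_const_mul, integral_indicator_one (hmeas _)]

theorem lintegral_natCast_eq_tsum {Ω : Type*} [MeasurableSpace Ω] {μ : Measure Ω} {f : Ω → ℕ}
    (hf : Measurable f) :
    ∫⁻ ω, (f ω : ℝ≥0∞) ∂μ = ∑' t : ℕ, μ {ω | t < f ω} := by
  have hcount : ∀ ω, (f ω : ℝ≥0∞) = ∑' t : ℕ, {ω | t < f ω}.indicator 1 ω := fun ω ↦ by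
    rw [tsum_eq_sum (s := range (f ω)) fun t ht ↦ by simpa using ht,
      sum_congr rfl fun t ht ↦
        Set.indicator_of_mem (show ω ∈ {ω | t < f ω} from mem_range.mp ht) _]
    simp
  have hmeas : ∀ t : ℕ, MeasurableSet {ω | t < f ω} :=
    fun t ↦ measurableSet_lt measurable_const hf
  rw [lintegral_congr hcount, lintegral_tsum (f := fun t ω ↦ {ω | t < f ω}.indicator 1 ω)
    fun t ↦ (measurable_const.indicator (hmeas t)).aemeasurable]
  simp [lintegral_indicator_one (hmeas _)]

theorem integral_natCast_eq_of_hasSum {Ω : Type*} [MeasurableSpace Ω] {μ : Measure Ω}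
    [IsFiniteMeasure μ] {f : Ω → ℕ} (hf : Measurable f) {a : ℝ}
    (h : HasSum (fun t ↦ μ.real {ω | t < f ω}) a) : ∫ ω, (f ω : ℝ) ∂μ = a := by
  rw [integral_eq_lintegral_of_nonneg_ae (.of_forall fun _ ↦ Nat.cast_nonneg _)
    (measurable_from_top.comp hf).aestronglyMeasurable]
  have hreal : ∀ t : ℕ, μ {ω | t < f ω} = ENNReal.ofReal (μ.real {ω | t < f ω}) :=
    fun t ↦ (ofReal_measureReal).symm
  simp_rw [ENNReal.ofReal_natCast, lintegral_natCast_eq_tsum hf, hreal,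
    ← ENNReal.ofReal_tsum_of_nonneg (fun _ ↦ measureReal_nonneg) h.summable, h.tsum_eq]
  exact ENNReal.toReal_ofReal (h.nonneg fun _ ↦ measureReal_nonneg)

theorem Nat.lt_sInf_iff_of_isUpperSet {S : Set ℕ} (hS : IsUpperSet S) {t : ℕ} :
    t < sInf S ↔ S.Nonempty ∧ t ∉ S := by
  refine ⟨fun h ↦ ⟨?_, fun ht ↦ h.not_ge (Nat.sInf_le ht)⟩, fun ⟨hne, ht⟩ ↦ ?_⟩
  · by_contra hS'
    simp [Set.not_nonempty_iff_eq_empty.mp hS'] at h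
  · by_contra! hle
    exact ht (hS hle (Nat.sInf_mem hne))

theorem Nat.lt_iInf_iff {ι : Type*} [Nonempty ι] {f : ι → ℕ} {t : ℕ} :
    t < ⨅ i, f i ↔ ∀ i, t < f i := by
  simp only [← Nat.succ_le_iff, le_ciInf_iff']

section Draws

variable {Ω H : Type*} {X : ℕ → Ω → H}

theorem lt_collectTime_iff {A : Set H} {ω : Ω} {t : ℕ} :
    t < collectTime X A ω ↔ (∃ t', ∀ a ∈ A, ∃ s, 1 ≤ s ∧ s ≤ t' ∧ X s ω = a) ∧
      ¬∀ a ∈ A, ∃ s, 1 ≤ s ∧ s ≤ t ∧ X s ω = a := by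
  refine Nat.lt_sInf_iff_of_isUpperSet ?_
  intro t t' hle ht a ha
  obtain ⟨s, h1, hs, hX⟩ := ht a ha
  exact ⟨s, h1, hs.trans hle, hX⟩

theorem lt_collectTime_iff_of_forall_exists {A : Finset H} {ω : Ω}
    (hseen : ∀ a ∈ A, ∃ s, 1 ≤ s ∧ X s ω = a) {t : ℕ} :
    t < collectTime X A ω ↔ ∃ a ∈ A, ∀ s ∈ Icc 1 t, X s ω ≠ a := by
  choose! τ hτ using hseen
  have hcomplete : ∀ a ∈ A, ∃ s, 1 ≤ s ∧ s ≤ A.sup τ ∧ X s ω = a :=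
    fun a ha ↦ ⟨τ a, (hτ a ha).1, le_sup ha, (hτ a ha).2⟩
  rw [lt_collectTime_iff, and_iff_right ⟨_, hcomplete⟩]
  simp [mem_Icc, and_imp]

variable [MeasurableSpace Ω] [MeasurableSpace H] [MeasurableSingletonClass H]

theorem measurable_collectTime [Countable H] (hmeas : ∀ t, Measurable (X t)) (A : Set H) :
    Measurable (collectTime X A) := by
  refine measurable_of_Ioi fun t ↦ ?_
  simp only [Set.preimage, Set.mem_Ioi, lt_collectTime_iff]
  measurability

variable {μ : Measure Ω} {N : ℕ}

theorem measureReal_preimage_finset (hmeas : ∀ t, Measurable (X t))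
    (hunif : ∀ t, ∀ c : H, μ {ω | X t ω = c} = (N : ENNReal)⁻¹) (s : ℕ) (C : Finset H) :
    μ.real (X s ⁻¹' C) = #C / N := by
  rw [measureReal_def,
    ← sum_measure_preimage_singleton C fun c _ ↦ hmeas s (measurableSet_singleton c)]
  simp [Set.preimage, hunif, div_eq_mul_inv]

theorem measureReal_forall_notMem [IsProbabilityMeasure μ] (hmeas : ∀ t, Measurable (X t))
    (hindep : iIndepFun X μ) (hunif : ∀ t, ∀ c : H, μ {ω | X t ω = c} = (N : ENNReal)⁻¹)
    (B : Finset H) (t : ℕ) :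
    μ.real {ω | ∀ s ∈ Icc 1 t, X s ω ∉ B} = (1 - #B / N) ^ t := by
  have hset : {ω | ∀ s ∈ Icc 1 t, X s ω ∉ B} = ⋂ s ∈ Icc 1 t, X s ⁻¹' (↑B)ᶜ := by
    ext; simp
  rw [hset, measureReal_def, hindep.meas_biInter fun s _ ↦ ⟨_, B.measurableSet.compl, rfl⟩]
  simp only [ENNReal.toReal_prod, ← measureReal_def, Set.preimage_compl,
    probReal_compl_eq_one_sub (hmeas _ B.measurableSet), measureReal_preimage_finset hmeas hunif,
    prod_const, Nat.card_Icc, add_tsub_cancel_right]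

theorem ae_forall_exists_eq [Fintype H] [IsProbabilityMeasure μ] (hcard : Fintype.card H = N)
    (hmeas : ∀ t, Measurable (X t)) (hindep : iIndepFun X μ)
    (hunif : ∀ t, ∀ c : H, μ {ω | X t ω = c} = (N : ENNReal)⁻¹) :
    ∀ᵐ ω ∂μ, ∀ c, ∃ s, 1 ≤ s ∧ X s ω = c := by
  rw [ae_all_iff]
  intro c
  have hN : (1 : ℝ) ≤ N := by
    rw [← hcard]; exact_mod_cast Fintype.card_pos_iff.mpr ⟨c⟩
  have hq : Filter.Tendsto (fun t : ℕ ↦ (1 - #{c} / N : ℝ) ^ t) Filter.atTop (nhds 0) := by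
    apply tendsto_pow_atTop_nhds_zero_of_lt_one
    · rw [card_singleton, Nat.cast_one, sub_nonneg]; exact div_le_one_of_le₀ hN (by positivity)
    · simp only [card_singleton, Nat.cast_one, sub_lt_self_iff]; positivity
  have hnull : μ.real {ω | ∀ s, 1 ≤ s → X s ω ≠ c} = 0 := by
    refine le_antisymm (ge_of_tendsto' hq fun t ↦ ?_) measureReal_nonneg
    rw [← measureReal_forall_notMem hmeas hindep hunif]
    refine measureReal_mono fun ω hω s hs ↦ ?_
    simpa using hω s (mem_Icc.mp hs).1
  rw [measureReal_eq_zero_iff] at hnull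
  simpa [ae_iff] using hnull

theorem measureReal_forall_exists_forall_ne [IsProbabilityMeasure μ] [DecidableEq H]
    {ι : Type*} [Fintype ι] [DecidableEq ι] (hmeas : ∀ t, Measurable (X t))
    (hindep : iIndepFun X μ) (hunif : ∀ t, ∀ c : H, μ {ω | X t ω = c} = (N : ENNReal)⁻¹)
    {A : ι → Finset H} (hA : Pairwise fun i j ↦ Disjoint (A i) (A j)) (t : ℕ) :
    μ.real {ω | ∀ i, ∃ a ∈ A i, ∀ s ∈ Icc 1 t, X s ω ≠ a} =
      ∑ γ ∈ Fintype.piFinset (fun i ↦ (A i).powerset.erase ∅),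
        (∏ i, (-1 : ℝ) ^ (#(γ i) + 1)) * (1 - #(univ.biUnion γ) / N) ^ t := by
  have hU : ∀ a, MeasurableSet {ω | ∀ s ∈ Icc 1 t, X s ω ≠ a} :=
    fun a ↦ measurableSet_setOfPred.mpr (by fun_prop)
  have hset : {ω | ∀ i, ∃ a ∈ A i, ∀ s ∈ Icc 1 t, X s ω ≠ a} =
      ⋂ i, ⋃ a ∈ A i, {ω | ∀ s ∈ Icc 1 t, X s ω ≠ a} := by
    ext; simp
  rw [hset, measureReal_iInter_biUnion hA hU]
  refine sum_congr rfl fun γ _ ↦ ?_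
  rw [← measureReal_forall_notMem hmeas hindep hunif]
  congr 2
  ext; simp only [Set.mem_iInter, Set.mem_ofPred_eq]; grind

theorem hasSum_measureReal_forall_exists_forall_ne [Fintype H] [IsProbabilityMeasure μ]
    [DecidableEq H] {ι : Type*} [Fintype ι] [DecidableEq ι] [Nonempty ι]
    (hcard : Fintype.card H = N) (hmeas : ∀ t, Measurable (X t)) (hindep : iIndepFun X μ)
    (hunif : ∀ t, ∀ c : H, μ {ω | X t ω = c} = (N : ENNReal)⁻¹)
    {A : ι → Finset H} (hA : Pairwise fun i j ↦ Disjoint (A i) (A j)) :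
    HasSum (fun t ↦ μ.real {ω | ∀ i, ∃ a ∈ A i, ∀ s ∈ Icc 1 t, X s ω ≠ a})
      (∑ γ ∈ Fintype.piFinset (fun i ↦ (A i).powerset.erase ∅),
        (∏ i, (-1 : ℝ) ^ (#(γ i) + 1)) * (N / #(univ.biUnion γ))) := by
  simp_rw [measureReal_forall_exists_forall_ne hmeas hindep hunif hA]
  refine hasSum_sum fun γ hγ ↦ ?_
  have hpos : (0 : ℝ) < #(univ.biUnion γ) := by exact_mod_cast card_biUnion_pos hγ
  have hle : (#(univ.biUnion γ) : ℝ) ≤ N := by exact_mod_cast hcard ▸ card_le_univ _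
  have hN : (0 : ℝ) < N := hpos.trans_le hle
  have hgeom := hasSum_geometric_of_lt_one (r := 1 - #(univ.biUnion γ) / (N : ℝ))
    (sub_nonneg.mpr (div_le_one_of_le₀ hle hN.le)) (sub_lt_self _ (div_pos hpos hN))
  rw [sub_sub_cancel, inv_div] at hgeom
  exact hgeom.mul_left _

theorem measureReal_lt_iInf_collectTime [Fintype H] [IsProbabilityMeasure μ] {ι : Type*}
    [Nonempty ι] (hcard : Fintype.card H = N) (hmeas : ∀ t, Measurable (X t))
    (hindep : iIndepFun X μ) (hunif : ∀ t, ∀ c : H, μ {ω | X t ω = c} = (N : ENNReal)⁻¹)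
    (A : ι → Finset H) (t : ℕ) :
    μ.real {ω | t < ⨅ i, collectTime X (A i : Set H) ω} =
      μ.real {ω | ∀ i, ∃ a ∈ A i, ∀ s ∈ Icc 1 t, X s ω ≠ a} := by
  refine measureReal_congr (Filter.eventuallyEq_set.mpr ?_)
  filter_upwards [ae_forall_exists_eq hcard hmeas hindep hunif] with ω hω
  simp only [Nat.lt_iInf_iff, lt_collectTime_iff_of_forall_exists fun a _ ↦ hω a]

end Draws

theorem expected_delay_first_to_complete_general
    {Ω : Type*} [MeasurableSpace Ω] (μ : Measure Ω) [IsProbabilityMeasure μ]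
    {H : Type*} [Fintype H] [MeasurableSpace H] [MeasurableSingletonClass H]
    (N : ℕ) (hcard : Fintype.card H = N)
    (X : ℕ → Ω → H) (hmeas : ∀ t, Measurable (X t))
    (hindep : iIndepFun X μ)
    (hunif : ∀ t, ∀ c : H, μ {ω | X t ω = c} = (N : ENNReal)⁻¹)
    (r : ℕ) (hr : 0 < r) (A : Fin r → Finset H)
    (hdisj : Pairwise fun i j => Disjoint (A i) (A j)) :
    ∫ ω, ((⨅ i, collectTime X (A i : Set H) ω : ℕ) : ℝ) ∂μ =
      N * ∫ u in (0 : ℝ)..1, (1 / (1 - u)) * ∏ i, (1 - u ^ ((A i).card)) := by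
  classical
  have : Nonempty (Fin r) := ⟨⟨0, hr⟩⟩
  have hT : Measurable fun ω ↦ ⨅ i, collectTime X (A i : Set H) ω :=
    .iInf fun i ↦ measurable_collectTime hmeas _
  have hsum := hasSum_measureReal_forall_exists_forall_ne hcard hmeas hindep hunif hdisj
  simp_rw [← measureReal_lt_iInf_collectTime hcard hmeas hindep hunif] at hsum
  rw [integral_natCast_eq_of_hasSum hT hsum, integral_div_one_sub_mul_prod_one_sub_pow hdisj,
    mul_sum]
  refine sum_congr rfl fun γ _ ↦ ?_
  ring

/-- Average delay of first-to-complete alignment among disjoint alignment sets: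
for i.i.d. uniform draws from a finite set `H` of size `N ≥ 1` and pairwise disjoint
nonempty subsets `A₁, …, A_r` with `|A_i| = a_i`, the first time `T = min_i σ_{A_i}`
at which some `A_i` is completely collected satisfies
`E[T] = N · ∫₀¹ (1/(1−u)) · ∏_i (1 − u^{a_i}) du`. -/
theorem expected_delay_first_to_complete
    {Ω : Type*} [MeasurableSpace Ω] (μ : Measure Ω) [IsProbabilityMeasure μ]
    {H : Type*} [Fintype H] [MeasurableSpace H] [MeasurableSingletonClass H]
    (N : ℕ) (hN : 1 ≤ N) (hcard : Fintype.card H = N)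
    (X : ℕ → Ω → H) (hmeas : ∀ t, Measurable (X t))
    (hindep : iIndepFun X μ)
    (hunif : ∀ t, ∀ c : H, μ {ω | X t ω = c} = (N : ENNReal)⁻¹)
    (r : ℕ) (hr : 0 < r) (A : Fin r → Finset H)
    (hA : ∀ i, (A i).Nonempty)
    (hdisj : Pairwise fun i j => Disjoint (A i) (A j)) :
    ∫ ω, ((⨅ i, collectTime X (A i : Set H) ω : ℕ) : ℝ) ∂μ =
      N * ∫ u in (0 : ℝ)..1, (1 / (1 - u)) * ∏ i, (1 - u ^ ((A i).card)) :=
  expected_delay_first_to_complete_general μ N hcard X hmeas hindep hunif r hr A hdisj
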